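/- With the notation of the context, fix endpoints a < b and let 𝒫 be any nonempty family of finite partitions a = z0 < z1 < ⋯ < zK = b. Define for a partition 𝒵 the accumulated error E(𝒵) = ∑_{k} ℰ²(z_{k−1}, z_k)·(z_k − z_{k−1}) and the accumulated deviation S(𝒵) = ∑_{k} σ*²(z_{k−1}, z_k)·(z_k − z_{k−1}). Then a partition 𝒵 ∈ 𝒫 minimizes E over 𝒫 if and only if it minimizes S over 𝒫. (Corollary 1 of the paper.) -/

import Mathlib

open MeasureTheory ProbabilityTheory

/-- The expected local effect `μ(z) = ∫ g(z,ω) dκ z(ω)`. -/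
noncomputable def expEffect {Ω : Type*} [MeasurableSpace Ω] (κ : Kernel ℝ Ω)
    (g : ℝ → Ω → ℝ) (z : ℝ) : ℝ :=
  ∫ ω, g z ω ∂(κ z)

/-- The conditional variance `σ²(z) = ∫ (g(z,ω) − μ(z))² dκ z(ω)`. -/
noncomputable def condVar {Ω : Type*} [MeasurableSpace Ω] (κ : Kernel ℝ Ω)
    (g : ℝ → Ω → ℝ) (z : ℝ) : ℝ :=
  ∫ ω, (g z ω - expEffect κ g z) ^ 2 ∂(κ z)

/-- The bin effect `μ̄(z1,z2) = (z2−z1)⁻¹ ∫_{z1}^{z2} μ(z) dz`. -/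
noncomputable def binEffect {Ω : Type*} [MeasurableSpace Ω] (κ : Kernel ℝ Ω)
    (g : ℝ → Ω → ℝ) (z1 z2 : ℝ) : ℝ :=
  (z2 - z1)⁻¹ * ∫ z in z1..z2, expEffect κ g z

/-- The bin variance `σ²(z1,z2) = (z2−z1)⁻¹ ∫_{z1}^{z2} σ²(z) dz`. -/
noncomputable def binVar {Ω : Type*} [MeasurableSpace Ω] (κ : Kernel ℝ Ω)
    (g : ℝ → Ω → ℝ) (z1 z2 : ℝ) : ℝ :=
  (z2 - z1)⁻¹ * ∫ z in z1..z2, condVar κ g z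

/-- The bin error `ℰ²(z1,z2) = (z2−z1)⁻¹ ∫_{z1}^{z2} (μ(z) − μ̄(z1,z2))² dz`. -/
noncomputable def binError {Ω : Type*} [MeasurableSpace Ω] (κ : Kernel ℝ Ω)
    (g : ℝ → Ω → ℝ) (z1 z2 : ℝ) : ℝ :=
  (z2 - z1)⁻¹ * ∫ z in z1..z2, (expEffect κ g z - binEffect κ g z1 z2) ^ 2

/-- `σ*²(z1,z2) = (z2−z1)⁻¹ ∫_{z1}^{z2} ∫ (g(z,ω) − μ̄(z1,z2))² dκ z(ω) dz`. -/
noncomputable def sigmaStarSq {Ω : Type*} [MeasurableSpace Ω] (κ : Kernel ℝ Ω)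
    (g : ℝ → Ω → ℝ) (z1 z2 : ℝ) : ℝ :=
  (z2 - z1)⁻¹ * ∫ z in z1..z2, ∫ ω, (g z ω - binEffect κ g z1 z2) ^ 2 ∂(κ z)

/-- A finite partition `a = z0 < z1 < ⋯ < zK = b` of the interval `[a, b]`. -/
structure BinPartition (a b : ℝ) where
  K : ℕ
  K_pos : 0 < K
  z : ℕ → ℝ
  strict : ∀ k < K, z k < z (k + 1)
  first : z 0 = a
  last : z K = b

/-- The accumulated error `E(𝒵) = ∑_k ℰ²(z_{k−1}, z_k)·(z_k − z_{k−1})`. -/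
noncomputable def accError {Ω : Type*} [MeasurableSpace Ω] (κ : Kernel ℝ Ω)
    (g : ℝ → Ω → ℝ) {a b : ℝ} (P : BinPartition a b) : ℝ :=
  ∑ k ∈ Finset.range P.K, binError κ g (P.z k) (P.z (k + 1)) * (P.z (k + 1) - P.z k)

/-- The accumulated deviation `S(𝒵) = ∑_k σ*²(z_{k−1}, z_k)·(z_k − z_{k−1})`. -/
noncomputable def accDeviation {Ω : Type*} [MeasurableSpace Ω] (κ : Kernel ℝ Ω)
    (g : ℝ → Ω → ℝ) {a b : ℝ} (P : BinPartition a b) : ℝ :=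
  ∑ k ∈ Finset.range P.K, sigmaStarSq κ g (P.z k) (P.z (k + 1)) * (P.z (k + 1) - P.z k)

section Aux

variable {Ω : Type*} [MeasurableSpace Ω] (κ : Kernel ℝ Ω) [IsMarkovKernel κ]
  (g : ℝ → Ω → ℝ)

/-- Second moment decomposition around an arbitrary center `m`. -/
lemma secondMoment (z m : ℝ) (h : MemLp (g z) 2 (κ z)) :
    ∫ ω, (g z ω - m) ^ 2 ∂(κ z) = condVar κ g z + (expEffect κ g z - m) ^ 2 := by
  set μz := expEffect κ g z with hμz
  have hgi : Integrable (g z) (κ z) := h.integrable one_le_two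
  have h2 : MemLp (fun ω => g z ω - μz) 2 (κ z) := h.sub (memLp_const μz)
  have hsq : Integrable (fun ω => (g z ω - μz) ^ 2) (κ z) := h2.integrable_sq
  have hlin : Integrable (fun ω => (2 * (μz - m)) * (g z ω - μz)) (κ z) :=
    (h2.integrable one_le_two).const_mul _
  have key : (fun ω => (g z ω - m) ^ 2)
      = fun ω => (g z ω - μz) ^ 2 + ((2 * (μz - m)) * (g z ω - μz) + (μz - m) ^ 2) := by
    funext ω; ring
  have hlin' : Integrable
      (fun ω => 2 * (μz - m) * (g z ω - μz) + (μz - m) ^ 2) (κ z) :=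
    hlin.add (integrable_const _)
  rw [key, integral_add hsq hlin',
    integral_add hlin (integrable_const ((μz - m) ^ 2)), integral_const_mul,
    integral_sub hgi (integrable_const _), integral_const]
  simp only [measure_univ, ENNReal.toReal_one, one_smul, smul_eq_mul]
  have : ∫ ω, g z ω ∂(κ z) = μz := rfl
  rw [this]
  simp [_root_.condVar, ← hμz]
  try ring

lemma condVar_eq (z : ℝ) (h : MemLp (g z) 2 (κ z)) :
    condVar κ g z = (∫ ω, g z ω ^ 2 ∂(κ z)) - (expEffect κ g z) ^ 2 := by
  have := secondMoment κ g z 0 h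
  simp only [sub_zero] at this
  linarith

lemma condVar_nonneg (z : ℝ) : 0 ≤ condVar κ g z :=
  integral_nonneg fun ω => sq_nonneg _

lemma meas_expEffect (hg : Measurable (Function.uncurry g)) :
    Measurable (expEffect κ g) :=
  hg.stronglyMeasurable.integral_kernel_prod_right'.measurable

lemma meas_sqint (hg : Measurable (Function.uncurry g)) :
    Measurable fun z => ∫ ω, g z ω ^ 2 ∂(κ z) := by
  have : Measurable (Function.uncurry fun z ω => g z ω ^ 2) := by
    exact (hg.pow_const 2)
  exact this.stronglyMeasurable.integral_kernel_prod_right'.measurable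

lemma meas_condVar (hg : Measurable (Function.uncurry g))
    (hL2 : ∀ z : ℝ, MemLp (g z) 2 (κ z)) : Measurable (condVar κ g) := by
  have : condVar κ g = fun z => (∫ ω, g z ω ^ 2 ∂(κ z)) - (expEffect κ g z) ^ 2 := by
    funext z; exact condVar_eq κ g z (hL2 z)
  rw [this]
  exact (meas_sqint κ g hg).sub ((meas_expEffect κ g hg).pow_const 2)

lemma mu_sq_le (z : ℝ) (h : MemLp (g z) 2 (κ z)) :
    (expEffect κ g z) ^ 2 ≤ ∫ ω, g z ω ^ 2 ∂(κ z) := by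
  have h1 := condVar_eq κ g z h
  have h2 := condVar_nonneg κ g z
  linarith

lemma integrableOn_condVar {a b : ℝ} (hg : Measurable (Function.uncurry g))
    (hL2 : ∀ z : ℝ, MemLp (g z) 2 (κ z))
    (hsq : IntegrableOn (fun t => ∫ ω, (g t ω) ^ 2 ∂(κ t)) (Set.Icc a b)) :
    IntegrableOn (condVar κ g) (Set.Icc a b) := by
  refine Integrable.mono hsq
    ((meas_condVar κ g hg hL2).aestronglyMeasurable.restrict) ?_
  filter_upwards with z
  rw [Real.norm_eq_abs, Real.norm_eq_abs, abs_of_nonneg (condVar_nonneg κ g z)]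
  have h1 := condVar_eq κ g z (hL2 z)
  have h2 := sq_nonneg (expEffect κ g z)
  have : condVar κ g z ≤ ∫ ω, g z ω ^ 2 ∂(κ z) := by linarith
  exact this.trans (le_abs_self _)

lemma integrableOn_mu_sq {a b : ℝ} (hg : Measurable (Function.uncurry g))
    (hL2 : ∀ z : ℝ, MemLp (g z) 2 (κ z))
    (hsq : IntegrableOn (fun t => ∫ ω, (g t ω) ^ 2 ∂(κ t)) (Set.Icc a b)) :
    IntegrableOn (fun z => (expEffect κ g z) ^ 2) (Set.Icc a b) := by
  refine Integrable.mono hsq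
    (((meas_expEffect κ g hg).pow_const 2).aestronglyMeasurable.restrict) ?_
  filter_upwards with z
  rw [Real.norm_eq_abs, Real.norm_eq_abs, abs_of_nonneg (sq_nonneg _)]
  exact (mu_sq_le κ g z (hL2 z)).trans (le_abs_self _)

lemma integrableOn_res_sq {a b : ℝ} (hg : Measurable (Function.uncurry g))
    (hL2 : ∀ z : ℝ, MemLp (g z) 2 (κ z))
    (hμ : IntegrableOn (fun t => ∫ ω, g t ω ∂(κ t)) (Set.Icc a b))
    (hsq : IntegrableOn (fun t => ∫ ω, (g t ω) ^ 2 ∂(κ t)) (Set.Icc a b)) (m : ℝ) :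
    IntegrableOn (fun z => (expEffect κ g z - m) ^ 2) (Set.Icc a b) := by
  have hμ' : IntegrableOn (expEffect κ g) (Set.Icc a b) := hμ
  have h1 : IntegrableOn
      (fun z => (expEffect κ g z) ^ 2 - (2 * m) * expEffect κ g z + m ^ 2)
      (Set.Icc a b) :=
    ((integrableOn_mu_sq κ g hg hL2 hsq).sub (hμ'.const_mul (2 * m))).add
      (integrableOn_const measure_Icc_lt_top.ne)
  refine h1.congr_fun ?_ measurableSet_Icc
  intro z _; ring

end Aux

/-- Partition points are monotone. -/
lemma BinPartition.z_mono {a b : ℝ} (P : BinPartition a b) :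
    ∀ j k, j ≤ k → k ≤ P.K → P.z j ≤ P.z k := by
  intro j k hjk hk
  induction k, hjk using Nat.le_induction with
  | base => exact le_rfl
  | succ n hn ih =>
    exact (ih (Nat.le_of_succ_le hk)).trans (P.strict n (Nat.lt_of_succ_le hk)).le

lemma BinPartition.mem_Icc {a b : ℝ} (P : BinPartition a b) {k : ℕ} (hk : k ≤ P.K) :
    a ≤ P.z k ∧ P.z k ≤ b := by
  constructor
  · have h := P.z_mono 0 k (Nat.zero_le _) hk; rw [P.first] at h; exact h
  · have h := P.z_mono k P.K hk le_rfl; rw [P.last] at h; exact h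

section Main

variable {Ω : Type*} [MeasurableSpace Ω] (κ : Kernel ℝ Ω) [IsMarkovKernel κ]
  (g : ℝ → Ω → ℝ)

lemma sigmaStar_decomp {a b z1 z2 : ℝ} (hg : Measurable (Function.uncurry g))
    (hL2 : ∀ z : ℝ, MemLp (g z) 2 (κ z))
    (hμ : IntegrableOn (fun t => ∫ ω, g t ω ∂(κ t)) (Set.Icc a b))
    (hsq : IntegrableOn (fun t => ∫ ω, (g t ω) ^ 2 ∂(κ t)) (Set.Icc a b))
    (ha : a ≤ z1) (h12 : z1 < z2) (hb : z2 ≤ b) :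
    sigmaStarSq κ g z1 z2 * (z2 - z1)
      = (∫ z in z1..z2, condVar κ g z) + binError κ g z1 z2 * (z2 - z1) := by
  set m := binEffect κ g z1 z2 with hm
  have hsub : Set.uIcc z1 z2 ⊆ Set.Icc a b := by
    rw [Set.uIcc_of_le h12.le]
    exact Set.Icc_subset_Icc ha hb
  have hV : IntervalIntegrable (condVar κ g) volume z1 z2 :=
    ((integrableOn_condVar κ g hg hL2 hsq).mono_set hsub).intervalIntegrable
  have hR : IntervalIntegrable (fun z => (expEffect κ g z - m) ^ 2) volume z1 z2 :=
    ((integrableOn_res_sq κ g hg hL2 hμ hsq m).mono_set hsub).intervalIntegrable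
  have hne : z2 - z1 ≠ 0 := by linarith
  have hinner : (∫ z in z1..z2, ∫ ω, (g z ω - m) ^ 2 ∂(κ z))
      = ∫ z in z1..z2, (condVar κ g z + (expEffect κ g z - m) ^ 2) := by
    refine intervalIntegral.integral_congr fun z _ => ?_
    exact secondMoment κ g z m (hL2 z)
  rw [sigmaStarSq, binError, ← hm, hinner, intervalIntegral.integral_add hV hR]
  field_simp
  try ring

lemma accDeviation_decomp {a b : ℝ} (hg : Measurable (Function.uncurry g))
    (hL2 : ∀ z : ℝ, MemLp (g z) 2 (κ z))
    (hμ : IntegrableOn (fun t => ∫ ω, g t ω ∂(κ t)) (Set.Icc a b))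
    (hsq : IntegrableOn (fun t => ∫ ω, (g t ω) ^ 2 ∂(κ t)) (Set.Icc a b))
    (P : BinPartition a b) :
    accDeviation κ g P = (∫ z in a..b, condVar κ g z) + accError κ g P := by
  have hterm : ∀ k ∈ Finset.range P.K,
      sigmaStarSq κ g (P.z k) (P.z (k + 1)) * (P.z (k + 1) - P.z k)
        = (∫ z in (P.z k)..(P.z (k + 1)), condVar κ g z)
          + binError κ g (P.z k) (P.z (k + 1)) * (P.z (k + 1) - P.z k) := by
    intro k hk
    rw [Finset.mem_range] at hk
    exact sigmaStar_decomp κ g hg hL2 hμ hsq (P.mem_Icc hk.le).1 (P.strict k hk)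
      (P.mem_Icc hk).2
  rw [accDeviation, Finset.sum_congr rfl hterm, Finset.sum_add_distrib]
  have hsum : (∑ k ∈ Finset.range P.K, ∫ z in (P.z k)..(P.z (k + 1)), condVar κ g z)
      = ∫ z in a..b, condVar κ g z := by
    rw [intervalIntegral.sum_integral_adjacent_intervals, P.first, P.last]
    intro k hk
    have hsub : Set.uIcc (P.z k) (P.z (k + 1)) ⊆ Set.Icc a b := by
      rw [Set.uIcc_of_le (P.strict k hk).le]
      exact Set.Icc_subset_Icc (P.mem_Icc hk.le).1 (P.mem_Icc hk).2
    exact ((integrableOn_condVar κ g hg hL2 hsq).mono_set hsub).intervalIntegrable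
  rw [hsum, accError]

end Main

/-- **Corollary 1 (RHALE paper)**: a partition minimizes the accumulated error over a family
of partitions iff it minimizes the accumulated deviation over that family. -/
theorem minimizes_accError_iff_minimizes_accDeviation
    {Ω : Type*} [MeasurableSpace Ω] (κ : Kernel ℝ Ω) [IsMarkovKernel κ]
    (g : ℝ → Ω → ℝ) (hg : Measurable (Function.uncurry g))
    (hL2 : ∀ z : ℝ, MemLp (g z) 2 (κ z))
    (a b : ℝ) (hab : a < b)
    (hμ : IntegrableOn (fun t => ∫ ω, g t ω ∂(κ t)) (Set.Icc a b))
    (hsq : IntegrableOn (fun t => ∫ ω, (g t ω) ^ 2 ∂(κ t)) (Set.Icc a b))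
    (Pfam : Set (BinPartition a b)) (hPfam : Pfam.Nonempty)
    (Z : BinPartition a b) (hZ : Z ∈ Pfam) :
    (∀ Z' ∈ Pfam, accError κ g Z ≤ accError κ g Z') ↔
      (∀ Z' ∈ Pfam, accDeviation κ g Z ≤ accDeviation κ g Z') := by
  constructor
  · intro h Z' hZ'
    rw [accDeviation_decomp κ g hg hL2 hμ hsq Z, accDeviation_decomp κ g hg hL2 hμ hsq Z']
    linarith [h Z' hZ']
  · intro h Z' hZ'
    have := h Z' hZ'
    rw [accDeviation_decomp κ g hg hL2 hμ hsq Z, accDeviation_decomp κ g hg hL2 hμ hsq Z'] at this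
    linarith
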